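/- arXiv:2303.09313 — 2 statements merged into one kernel-verified Lean document; each statement's English description precedes it below -/
import Mathlib

section
/- For all complex numbers x, y, z not all zero, if x·conj(y)² + y·conj(z)² + z·conj(x)² = 0, then 2·|conj(x)·y·z² + conj(y)·z·x² + conj(z)·x·y²| < |x|⁴ + |y|⁴ + |z|⁴. -/
/-!
Write `B` for the left-hand sum and `a, b, c` for `|x|², |y|², |z|²`. Multiplying `B` by its
conjugate and reducing with the hypothesis and its conjugate turns `|B|²` into a real quartic
`Q(a, b, c)` in the squared moduli alone. The claim then becomes `4 Q < (a² + b² + c²)²`, which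
follows from the identity
`3 ((a² + b² + c²)² - 4Q) = a⁴ + b⁴ + c⁴ + 2((a² - 3ac)² + (b² - 3ab)² + (c² - 3bc)²)`
(the right side is positive unless `a = b = c = 0`).
-/

def jouanolouQuartic {R : Type*} [CommRing R] (a b c : R) : R :=
  a ^ 3 * c + a * b ^ 3 + b * c ^ 3 - a ^ 2 * b ^ 2 - b ^ 2 * c ^ 2 - c ^ 2 * a ^ 2

/-- Over `ℂ`, read `X, Y, Z` as the conjugates of `x, y, z`. -/
lemma jouanolou_mul_eq_jouanolouQuartic {R : Type*} [CommRing R] (x y z X Y Z : R)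
    (h : x * Y ^ 2 + y * Z ^ 2 + z * X ^ 2 = 0) (hc : X * y ^ 2 + Y * z ^ 2 + Z * x ^ 2 = 0) :
    (X * y * z ^ 2 + Y * z * x ^ 2 + Z * x * y ^ 2)
        * (x * Y * Z ^ 2 + y * Z * X ^ 2 + z * X * Y ^ 2) =
      jouanolouQuartic (x * X) (y * Y) (z * Z) := by
  unfold jouanolouQuartic
  linear_combination (z * Z * (X * y ^ 2 + Z * x ^ 2) + x * X * (X * y ^ 2 + Y * z ^ 2)
      + y * Y * (Y * z ^ 2 + Z * x ^ 2)) * h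
    - (z * Z * (y * Z ^ 2) + x * X * (z * X ^ 2) + y * Y * (x * Y ^ 2)) * hc

lemma four_mul_jouanolouQuartic_lt {R : Type*} [CommRing R] [LinearOrder R]
    [IsStrictOrderedRing R] {a b c : R} (h0 : ¬(a = 0 ∧ b = 0 ∧ c = 0)) :
    4 * jouanolouQuartic a b c < (a ^ 2 + b ^ 2 + c ^ 2) ^ 2 := by
  have sos : 3 * ((a ^ 2 + b ^ 2 + c ^ 2) ^ 2 - 4 * jouanolouQuartic a b c) =
      a ^ 4 + b ^ 4 + c ^ 4
        + 2 * ((a ^ 2 - 3 * a * c) ^ 2 + (b ^ 2 - 3 * a * b) ^ 2 + (c ^ 2 - 3 * b * c) ^ 2) := by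
    unfold jouanolouQuartic; ring
  have hquartics : 0 < a ^ 4 + b ^ 4 + c ^ 4 := by
    rcases not_and_or.mp h0 with ha | hbc
    · positivity
    rcases not_and_or.mp hbc with hb | hc <;> positivity
  nlinarith [sq_nonneg (a ^ 2 - 3 * a * c), sq_nonneg (b ^ 2 - 3 * a * b),
    sq_nonneg (c ^ 2 - 3 * b * c)]

lemma Complex.sq_norm_jouanolou_eq_jouanolouQuartic {x y z : ℂ}
    (h : x * starRingEnd ℂ y ^ 2 + y * starRingEnd ℂ z ^ 2 + z * starRingEnd ℂ x ^ 2 = 0) :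
    ‖starRingEnd ℂ x * y * z ^ 2 + starRingEnd ℂ y * z * x ^ 2
        + starRingEnd ℂ z * x * y ^ 2‖ ^ 2 = jouanolouQuartic (‖x‖ ^ 2) (‖y‖ ^ 2) (‖z‖ ^ 2) := by
  have hc := congrArg (starRingEnd ℂ) h
  simp only [map_add, map_mul, map_pow, Complex.conj_conj, map_zero] at hc
  apply Complex.ofReal_injective
  rw [Complex.ofReal_pow, ← Complex.mul_conj']
  simp only [map_add, map_mul, map_pow, Complex.conj_conj]
  rw [jouanolou_mul_eq_jouanolouQuartic x y z _ _ _ h hc]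
  simp only [Complex.mul_conj', jouanolouQuartic]
  push_cast
  ring

theorem jouanolou_PB_inequality (x y z : ℂ) (h0 : ¬(x = 0 ∧ y = 0 ∧ z = 0))
    (h : x * (starRingEnd ℂ y)^2 + y * (starRingEnd ℂ z)^2 + z * (starRingEnd ℂ x)^2 = 0) :
    2 * ‖(starRingEnd ℂ x) * y * z^2 + (starRingEnd ℂ y) * z * x^2
        + (starRingEnd ℂ z) * x * y^2‖
      < ‖x‖ ^ 4 + ‖y‖ ^ 4 + ‖z‖ ^ 4 := by
  have hnorms : ¬(‖x‖ ^ 2 = 0 ∧ ‖y‖ ^ 2 = 0 ∧ ‖z‖ ^ 2 = 0) := by simpa using h0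
  have hlt := four_mul_jouanolouQuartic_lt hnorms
  rw [← Complex.sq_norm_jouanolou_eq_jouanolouQuartic h] at hlt
  refine lt_of_pow_lt_pow_left₀ 2 (by positivity) ?_
  calc _ = 4 * ‖(starRingEnd ℂ x) * y * z^2 + (starRingEnd ℂ y) * z * x^2
        + (starRingEnd ℂ z) * x * y^2‖ ^ 2 := by ring
    _ < _ := hlt
    _ = _ := by ring
end

section
/- For all u, v in the closed unit disk of ℂ, if u·conj(v)² + v + conj(u)² = 0 then |conj(u)·v + conj(v)·u² + u·v²| < (1/2)·(|u|⁴ + |v|⁴ + 1). -/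
/-!
Subtracting `u v` times the equation of the curve gives
`E = (1 - |u|²) ū v + (1 - |v|²) u² v̄`, so with `a = |u|`, `b = |v|` in `[0, 1]` and `s = a² + b²`,
`|E| ≤ a b (2 - s) ≤ s (2 - s) / 2 = 1/2 - (1 - s)² / 2`, which is strictly below
`1/2 + (a⁴ + b⁴) / 2`.
-/

theorem jouanolou_expr_eq_of_eq_zero {R : Type*} [CommRing R] {u v u' v' : R}
    (h : u * v' ^ 2 + v + u' ^ 2 = 0) :
    u' * v + v' * u ^ 2 + u * v ^ 2 = (1 - u * u') * (u' * v) + (1 - v * v') * (u ^ 2 * v') := by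
  linear_combination u * v * h

theorem Complex.norm_one_sub_mul_conj {z : ℂ} (hz : ‖z‖ ≤ 1) :
    ‖1 - z * starRingEnd ℂ z‖ = 1 - ‖z‖ ^ 2 := by
  rw [Complex.mul_conj', ← Complex.ofReal_pow, ← Complex.ofReal_one, ← Complex.ofReal_sub,
    Complex.norm_real, Real.norm_of_nonneg (by nlinarith [norm_nonneg z])]

theorem one_sub_sq_mul_add_one_sub_sq_mul_lt {a b : ℝ} (ha₀ : 0 ≤ a) (ha₁ : a ≤ 1) (hb₀ : 0 ≤ b)
    (hb₁ : b ≤ 1) :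
    (1 - a ^ 2) * (a * b) + (1 - b ^ 2) * (a ^ 2 * b) < 1 / 2 * (a ^ 4 + b ^ 4 + 1) := by
  have hab : 0 ≤ a * b := mul_nonneg ha₀ hb₀
  have hb₂ : 0 ≤ 1 - b ^ 2 := by nlinarith
  have hs₂ : a ^ 2 + b ^ 2 ≤ 2 := by nlinarith
  calc (1 - a ^ 2) * (a * b) + (1 - b ^ 2) * (a ^ 2 * b)
      ≤ a * b * (2 - (a ^ 2 + b ^ 2)) := by
        nlinarith [mul_nonneg hb₂ (mul_nonneg hab (sub_nonneg.2 ha₁))]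
    _ ≤ (a ^ 2 + b ^ 2) / 2 * (2 - (a ^ 2 + b ^ 2)) := by
        gcongr
        linarith [two_mul_le_add_sq a b]
    _ = 1 / 2 - (1 - (a ^ 2 + b ^ 2)) ^ 2 / 2 := by ring
    _ < 1 / 2 * (a ^ 4 + b ^ 4 + 1) := by
        nlinarith [sq_nonneg (a ^ 2 - b ^ 2), sq_nonneg (1 - (a ^ 2 + b ^ 2)),
          sq_nonneg (a ^ 2 + b ^ 2)]

theorem jouanolou_affine_inequality (u v : ℂ)
    (hu : ‖u‖ ≤ 1) (hv : ‖v‖ ≤ 1)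
    (h : u * (starRingEnd ℂ v)^2 + v + (starRingEnd ℂ u)^2 = 0) :
    ‖(starRingEnd ℂ u) * v + (starRingEnd ℂ v) * u^2 + u * v^2‖
      < (1/2) * (‖u‖ ^ 4 + ‖v‖ ^ 4 + 1) := by
  rw [jouanolou_expr_eq_of_eq_zero h]
  refine (norm_add_le _ _).trans_lt ?_
  simpa only [norm_mul, norm_pow, Complex.norm_conj, Complex.norm_one_sub_mul_conj hu,
    Complex.norm_one_sub_mul_conj hv] using
    one_sub_sq_mul_add_one_sub_sq_mul_lt (norm_nonneg u) hu (norm_nonneg v) hv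
end
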